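/- Let G be a positive graph (possibly with self-loops) with generalized Laplacian 𝓛 = D - W + diag(W), and let G be partitioned into Q vertex-disjoint sub-graphs with generalized Laplacians 𝓛^1,...,𝓛^Q (edges between different sub-graphs removed). Then min_q λ⁻_min(𝓛^q) ≤ λ_min(𝓛), where λ⁻_min denotes the smallest Gershgorin disc left-end and λ_min the smallest eigenvalue. -/
import Mathlib


open Matrix

/-- The generalized graph Laplacian `𝓛 = D - W + diag(W)` of a graph with
(possibly nonzero-diagonal, i.e. self-loop) weight matrix `W`. -/
noncomputable def genLap {N : ℕ} (W : Matrix (Fin N) (Fin N) ℝ) :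
    Matrix (Fin N) (Fin N) ℝ :=
  Matrix.diagonal (fun i => ∑ j, W i j) - W + Matrix.diagonal (fun i => W i i)

/-- The adjacency matrix of the disjoint union of sub-graphs induced by a
partition `p : Fin N → Fin Q` of the vertex set: all edges between distinct
parts are removed. -/
def partW {N Q : ℕ} (W : Matrix (Fin N) (Fin N) ℝ) (p : Fin N → Fin Q) :
    Matrix (Fin N) (Fin N) ℝ :=
  Matrix.of fun i j => if p i = p j then W i j else 0

lemma genLap_diag {N : ℕ} (W : Matrix (Fin N) (Fin N) ℝ) (i : Fin N) :
    genLap W i i = ∑ j, W i j := by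
  simp [genLap, Matrix.diagonal]

lemma genLap_off {N : ℕ} (W : Matrix (Fin N) (Fin N) ℝ) {i j : Fin N} (h : j ≠ i) :
    genLap W i j = -W i j := by
  have h' : ¬ (i = j) := fun e => h e.symm
  simp [genLap, Matrix.diagonal, if_neg h']

/-- Gershgorin left-end of row `i` of `genLap M` is `M i i` (for nonneg `M`). -/
lemma gersh_left {N : ℕ} (M : Matrix (Fin N) (Fin N) ℝ) (h : ∀ i j, 0 ≤ M i j) (i : Fin N) :
    genLap M i i - ∑ j ∈ Finset.univ \ {i}, |genLap M i j| = M i i := by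
  rw [genLap_diag]
  have h1 : ∑ j ∈ Finset.univ \ {i}, |genLap M i j| = ∑ j ∈ Finset.univ \ {i}, M i j := by
    apply Finset.sum_congr rfl
    intro j hj
    have hji : j ≠ i := by simpa using (Finset.mem_sdiff.mp hj).2
    rw [genLap_off M hji, abs_neg, abs_of_nonneg (h i j)]
  rw [h1]
  have h2 : ∑ j, M i j = M i i + ∑ j ∈ Finset.univ \ {i}, M i j := by
    rw [Finset.sdiff_singleton_eq_erase, Finset.add_sum_erase _ _ (Finset.mem_univ i)]
  rw [h2]; ring

/-- Lemma 1: partition a positive graph `G` (possibly with self-loops) into `Q`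
vertex-disjoint sub-graphs `G^1, …, G^Q` (edges across parts removed).  The
smallest Gershgorin disc left-end among all rows of the sub-graphs' generalized
Laplacians `𝓛^1, …, 𝓛^Q` (equivalently, of the block-diagonal generalized
Laplacian of the partitioned graph) is a lower bound on `λ_min(𝓛)`, i.e. it
lower-bounds every eigenvalue of `𝓛`. -/
theorem subgraph_gct_lower_bound (n Q : ℕ)
    (W : Matrix (Fin (n + 1)) (Fin (n + 1)) ℝ)
    (hsym : W.IsSymm) (hnonneg : ∀ i j, 0 ≤ W i j)
    (p : Fin (n + 1) → Fin Q)
    (lam : ℝ) (v : Fin (n + 1) → ℝ) (hv : v ≠ 0)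
    (heig : (genLap W).mulVec v = lam • v) :
    Finset.univ.inf' Finset.univ_nonempty
      (fun i => genLap (partW W p) i i
        - ∑ j ∈ Finset.univ \ {i}, |genLap (partW W p) i j|) ≤ lam := by
  -- pick the coordinate of maximal |v|
  obtain ⟨i, -, hi⟩ := Finset.exists_max_image Finset.univ (fun k => |v k|) ⟨0, Finset.mem_univ 0⟩
  have hvi : v i ≠ 0 := by
    obtain ⟨k, hk⟩ := Function.ne_iff.mp hv
    intro h0
    have := hi k (Finset.mem_univ k)
    rw [h0, abs_zero] at this
    exact hk (abs_nonpos_iff.mp this)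
  have hvi' : 0 < |v i| := abs_pos.mpr hvi
  set L := genLap W with hL
  -- the eigenvalue equation at row i
  have heigi : ∑ j, L i j * v j = lam * v i := by
    have := congrFun heig i
    simpa [Matrix.mulVec, dotProduct] using this
  have key : (lam - L i i) * v i = ∑ j ∈ Finset.univ \ {i}, L i j * v j := by
    have : ∑ j, L i j * v j = L i i * v i + ∑ j ∈ Finset.univ \ {i}, L i j * v j := by
      rw [Finset.sdiff_singleton_eq_erase]
      exact (Finset.add_sum_erase _ (fun j => L i j * v j) (Finset.mem_univ i)).symm
    rw [this] at heigi
    linarith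
  have habs : |lam - L i i| * |v i| ≤ (∑ j ∈ Finset.univ \ {i}, |L i j|) * |v i| := by
    calc |lam - L i i| * |v i| = |(lam - L i i) * v i| := (abs_mul _ _).symm
      _ = |∑ j ∈ Finset.univ \ {i}, L i j * v j| := by rw [key]
      _ ≤ ∑ j ∈ Finset.univ \ {i}, |L i j * v j| := Finset.abs_sum_le_sum_abs _ _
      _ ≤ ∑ j ∈ Finset.univ \ {i}, |L i j| * |v i| := by
          apply Finset.sum_le_sum
          intro j _
          rw [abs_mul]
          exact mul_le_mul_of_nonneg_left (hi j (Finset.mem_univ j)) (abs_nonneg _)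
      _ = (∑ j ∈ Finset.univ \ {i}, |L i j|) * |v i| := (Finset.sum_mul _ _ _).symm
  have hR : |lam - L i i| ≤ ∑ j ∈ Finset.univ \ {i}, |L i j| :=
    le_of_mul_le_mul_right habs hvi'
  have hlow : L i i - ∑ j ∈ Finset.univ \ {i}, |L i j| ≤ lam := by
    have := neg_abs_le (lam - L i i)
    have h2 := neg_le_neg hR
    linarith
  -- Gershgorin left-ends equal the diagonal of W for both matrices
  have hW : L i i - ∑ j ∈ Finset.univ \ {i}, |L i j| = W i i := gersh_left W hnonneg i
  have hPnn : ∀ a b, 0 ≤ partW W p a b := by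
    intro a b
    simp only [partW, Matrix.of_apply]
    split
    · exact hnonneg a b
    · exact le_refl 0
  have hP : genLap (partW W p) i i - ∑ j ∈ Finset.univ \ {i}, |genLap (partW W p) i j|
      = W i i := by
    rw [gersh_left (partW W p) hPnn i]
    simp [partW]
  calc (Finset.univ.inf' Finset.univ_nonempty
      (fun i => genLap (partW W p) i i
        - ∑ j ∈ Finset.univ \ {i}, |genLap (partW W p) i j|))
      ≤ genLap (partW W p) i i - ∑ j ∈ Finset.univ \ {i}, |genLap (partW W p) i j| :=
        Finset.inf'_le _ (Finset.mem_univ i)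
    _ = W i i := hP
    _ ≤ lam := by rw [← hW]; exact hlow
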